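/- Let M be a metric space admitting a total order T and a constant C such that OR_{M,T}(k) ≤ C for all k ≥ 1, let Ω ⊆ M, and for s ≥ 1 let M_s(Ω) be the metric space obtained from s disjoint copies of M by gluing them along Ω (points of Ω are identified across all copies; the distance between points in different copies is the infimum of sums of distances through points of Ω). Then M_s(Ω) admits a total order T_s with OR_{M_s(Ω),T_s}(k) ≤ sC + s − 1 for all k ≥ 1. -/

import Mathlib

open scoped Classical

/-- Length of the path visiting the points of a list in order,
for a distance function `d`. -/
noncomputable def pathLen {α : Type*} (d : α → α → ℝ) : List α → ℝ
  | [] => 0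
  | [_] => 0
  | a :: b :: l => d a b + pathLen d (b :: l)

/-- `lopt d X` : minimal length of a path visiting all points of the finite set `X`. -/
noncomputable def lopt {α : Type*} (d : α → α → ℝ) (X : Finset α) : ℝ :=
  sInf {r : ℝ | ∃ l : List α, l.Nodup ∧ l.toFinset = X ∧ pathLen d l = r}

/-- `lord d T X` : length of the path visiting all points of `X` in the order `T`. -/
noncomputable def lord {α : Type*} (d : α → α → ℝ) (T : LinearOrder α) (X : Finset α) : ℝ :=
  sInf {r : ℝ | ∃ l : List α, l.Nodup ∧ l.toFinset = X ∧ List.Pairwise T.lt l ∧ pathLen d l = r}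

/-- The order ratio function `OR_{M,T}(k)`. -/
noncomputable def ORd {α : Type*} (d : α → α → ℝ) (T : LinearOrder α) (k : ℕ) : ℝ :=
  sSup {r : ℝ | ∃ X : Finset α, 2 ≤ X.card ∧ X.card ≤ k + 1 ∧ r = lord d T X / lopt d X}

/-!
Order the glued space lexicographically: first by the index of a copy containing the point
(for a glued point any one of them will do), then by `T` inside that copy. For a finite `X` the
`T_s`-ordered path through `X` is then the concatenation of `s` blocks, one per copy, joined by
at most `s - 1` jumps. Each jump is a distance between two points of `X`, hence at most
`l_opt(X)`. Each block is mapped isometrically onto a `T`-ordered path in `M` through at most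
`k + 1` points, so its length is at most `C` times the optimal length of its image, and that is
at most `l_opt(X)` because the projection `M_s(Ω) → M` is `1`-Lipschitz.
-/

section PathLen

variable {α β : Type*} [PseudoMetricSpace α] [PseudoMetricSpace β]

lemma pathLen_cons_cons (a b : α) (l : List α) :
    pathLen dist (a :: b :: l) = dist a b + pathLen dist (b :: l) := rfl

lemma pathLen_eq_zero_of_length_le_one : ∀ {l : List α}, l.length ≤ 1 → pathLen dist l = 0
  | [], _ | [_], _ => rfl
  | _ :: _ :: _, h => by simp at h

lemma pathLen_nonneg : ∀ l : List α, 0 ≤ pathLen dist l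
  | [] | [_] => le_rfl
  | _ :: b :: l => add_nonneg dist_nonneg (pathLen_nonneg (b :: l))

lemma pathLen_le_pathLen_cons (a : α) : ∀ l : List α, pathLen dist l ≤ pathLen dist (a :: l)
  | [] => le_rfl
  | _ :: _ => le_add_of_nonneg_left dist_nonneg

lemma pathLen_cons_le_cons_cons (a b : α) : ∀ l : List α,
    pathLen dist (a :: l) ≤ pathLen dist (a :: b :: l)
  | [] => by simp [pathLen]
  | c :: l => by
    simp only [pathLen_cons_cons]
    linarith [dist_triangle a b c]

lemma pathLen_cons_le_of_sublist {l₁ l₂ : List α} (h : l₁.Sublist l₂) (a : α) :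
    pathLen dist (a :: l₁) ≤ pathLen dist (a :: l₂) := by
  induction h generalizing a with
  | slnil => exact le_rfl
  | cons b _ ih => exact (ih a).trans (pathLen_cons_le_cons_cons a b _)
  | cons_cons b _ ih =>
    simp only [pathLen_cons_cons]
    linarith [ih b]

lemma pathLen_le_of_sublist {l₁ l₂ : List α} (h : l₁.Sublist l₂) :
    pathLen dist l₁ ≤ pathLen dist l₂ := by
  induction h with
  | slnil => exact le_rfl
  | cons b _ ih => exact ih.trans (pathLen_le_pathLen_cons b _)
  | cons_cons b h _ => exact pathLen_cons_le_of_sublist h b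

lemma dist_le_pathLen_of_mem_head (a : α) :
    ∀ {l : List α} {b : α}, b ∈ a :: l → dist a b ≤ pathLen dist (a :: l)
  | [], b, hb => by simp_all [pathLen]
  | c :: l, b, hb => by
    rw [pathLen_cons_cons]
    rcases List.mem_cons.mp hb with rfl | hb
    · rw [dist_self]
      exact add_nonneg dist_nonneg (pathLen_nonneg _)
    · linarith [dist_triangle a c b, dist_le_pathLen_of_mem_head c hb]

lemma dist_le_pathLen {l : List α} {a b : α} (ha : a ∈ l) (hb : b ∈ l) :
    dist a b ≤ pathLen dist l := by
  induction l with
  | nil => simp at ha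
  | cons c l ih =>
    rcases List.mem_cons.mp ha with rfl | ha
    · exact dist_le_pathLen_of_mem_head a hb
    rcases List.mem_cons.mp hb with rfl | hb
    · rw [dist_comm]
      exact dist_le_pathLen_of_mem_head b (by simp [ha])
    · exact (ih ha hb).trans (pathLen_le_pathLen_cons c l)

lemma pathLen_le_length_mul {B : ℝ} (hB : 0 ≤ B) :
    ∀ {l : List α}, (∀ a ∈ l, ∀ b ∈ l, dist a b ≤ B) → pathLen dist l ≤ l.length * B
  | [], _ => by simp [pathLen]
  | [_], _ => by simpa [pathLen] using hB
  | a :: b :: l, h => by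
    have ih := pathLen_le_length_mul hB (l := b :: l) fun x hx y hy =>
      h x (List.mem_cons_of_mem _ hx) y (List.mem_cons_of_mem _ hy)
    rw [pathLen_cons_cons, List.length_cons (a := a)]
    push_cast
    linarith [h a (by simp) b (by simp)]

lemma pathLen_append_le {B : ℝ} (hB : 0 ≤ B) {l₂ : List α} :
    ∀ {l₁ : List α}, (∀ a ∈ l₁, ∀ b ∈ l₂, dist a b ≤ B) →
      pathLen dist (l₁ ++ l₂) ≤ pathLen dist l₁ + B + pathLen dist l₂
  | [], _ => by simpa [pathLen] using hB
  | [a], h => by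
    cases l₂ with
    | nil => simpa [pathLen] using hB
    | cons b l₂ =>
      simp only [List.cons_append, List.nil_append, pathLen_cons_cons]
      linarith [h a (by simp) b (by simp), show pathLen dist [a] = 0 from rfl]
  | a :: b :: l₁, h => by
    have ih := pathLen_append_le hB (l₁ := b :: l₁) fun x hx y hy =>
      h x (List.mem_cons_of_mem _ hx) y hy
    simp only [List.cons_append, pathLen_cons_cons] at ih ⊢
    linarith

lemma pathLen_flatten_le {B : ℝ} (hB : 0 ≤ B) :
    ∀ {Ls : List (List α)}, (∀ a ∈ Ls.flatten, ∀ b ∈ Ls.flatten, dist a b ≤ B) →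
      pathLen dist Ls.flatten ≤ (Ls.map (pathLen dist)).sum + ((Ls.length - 1 : ℕ) : ℝ) * B
  | [], _ => by simp [pathLen]
  | [l], _ => by simp
  | l :: l' :: Ls, h => by
    have ih := pathLen_flatten_le hB (Ls := l' :: Ls) fun x hx y hy =>
      h x (List.mem_append_right _ hx) y (List.mem_append_right _ hy)
    have happ := pathLen_append_le hB (l₁ := l) (l₂ := (l' :: Ls).flatten) fun x hx y hy =>
      h x (List.mem_append_left _ hx) y (List.mem_append_right _ hy)
    simp only [List.flatten_cons, List.map_cons, List.sum_cons, List.length_cons,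
      Nat.add_sub_cancel] at ih happ ⊢
    push_cast
    linarith

lemma pathLen_map_le {f : α → β} (hf : ∀ x y, dist (f x) (f y) ≤ dist x y) :
    ∀ l : List α, pathLen dist (l.map f) ≤ pathLen dist l
  | [] | [_] => le_rfl
  | a :: b :: l => add_le_add (hf a b) (pathLen_map_le hf (b :: l))

lemma pathLen_map_eq {f : α → β} :
    ∀ {l : List α}, (∀ x ∈ l, ∀ y ∈ l, dist (f x) (f y) = dist x y) →
      pathLen dist (l.map f) = pathLen dist l
  | [], _ | [_], _ => rfl
  | a :: b :: l, h => by
    have ih := pathLen_map_eq (l := b :: l) fun x hx y hy =>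
      h x (List.mem_cons_of_mem _ hx) y (List.mem_cons_of_mem _ hy)
    simp only [List.map_cons, pathLen_cons_cons] at ih ⊢
    rw [h a (by simp) b (by simp), ih]

end PathLen

section OptimalAndOrderedLength

variable {α β : Type*} [PseudoMetricSpace α] [PseudoMetricSpace β]

lemma lopt_le_pathLen {X : Finset α} {l : List α} (hl : l.Nodup) (hlX : l.toFinset = X) :
    lopt dist X ≤ pathLen dist l :=
  csInf_le ⟨0, by rintro r ⟨l, -, -, rfl⟩; exact pathLen_nonneg l⟩ ⟨l, hl, hlX, rfl⟩

lemma le_lopt {X : Finset α} {B : ℝ}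
    (h : ∀ l : List α, l.Nodup → l.toFinset = X → B ≤ pathLen dist l) : B ≤ lopt dist X :=
  le_csInf ⟨_, X.toList, X.nodup_toList, X.toList_toFinset, rfl⟩ <| by
    rintro r ⟨l, hl, hlX, rfl⟩
    exact h l hl hlX

lemma lopt_nonneg (X : Finset α) : 0 ≤ lopt dist X :=
  le_lopt fun l _ _ => pathLen_nonneg l

lemma dist_le_lopt {X : Finset α} {a b : α} (ha : a ∈ X) (hb : b ∈ X) :
    dist a b ≤ lopt dist X :=
  le_lopt fun l _ hlX => dist_le_pathLen (by simpa [← hlX] using ha) (by simpa [← hlX] using hb)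

lemma lopt_pos {γ : Type*} [MetricSpace γ] {X : Finset γ} (hX : 2 ≤ X.card) :
    0 < lopt dist X := by
  obtain ⟨a, ha, b, hb, hab⟩ := Finset.one_lt_card.mp hX
  exact (dist_pos.mpr hab).trans_le (dist_le_lopt ha hb)

lemma lopt_le_of_forall_mem_exists {f : α → β} (hf : ∀ x y, dist (f x) (f y) ≤ dist x y)
    {X : Finset α} {Y : Finset β} (hY : ∀ y ∈ Y, ∃ x ∈ X, f x = y) :
    lopt dist Y ≤ lopt dist X := by
  refine le_lopt fun l hl hlX => ?_
  set l' := ((l.map f).filter (· ∈ Y)).dedup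
  have hl'Y : l'.toFinset = Y := by
    ext y
    simp only [l', List.mem_toFinset, List.mem_dedup, List.mem_filter, List.mem_map,
      decide_eq_true_eq, and_iff_right_iff_imp]
    intro hy
    obtain ⟨x, hx, rfl⟩ := hY y hy
    exact ⟨x, by simpa [← hlX] using hx, rfl⟩
  calc lopt dist Y ≤ pathLen dist l' := lopt_le_pathLen (List.nodup_dedup _) hl'Y
    _ ≤ pathLen dist (l.map f) :=
      pathLen_le_of_sublist ((List.dedup_sublist _).trans List.filter_sublist)
    _ ≤ pathLen dist l := pathLen_map_le hf l

variable (T : LinearOrder α)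

lemma lord_le_pathLen {X : Finset α} {l : List α} (hl : l.Nodup) (hlX : l.toFinset = X)
    (hlT : l.Pairwise T.lt) : lord dist T X ≤ pathLen dist l :=
  csInf_le ⟨0, by rintro r ⟨l, -, -, -, rfl⟩; exact pathLen_nonneg l⟩ ⟨l, hl, hlX, hlT, rfl⟩

lemma lord_eq_pathLen {X : Finset α} {l : List α} (hl : l.Nodup) (hlX : l.toFinset = X)
    (hlT : l.Pairwise T.lt) : lord dist T X = pathLen dist l := by
  let := T
  have hunique : ∀ l' : List α, l'.Nodup → l'.toFinset = X → l'.Pairwise T.lt → l' = l :=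
    fun l' hl' hl'X hl'T => (List.perm_of_nodup_nodup_toFinset_eq hl' hl
      (hl'X.trans hlX.symm)).eq_of_pairwise' hl'T hlT
  have hset : {r : ℝ | ∃ l' : List α, l'.Nodup ∧ l'.toFinset = X ∧ l'.Pairwise T.lt ∧
      pathLen dist l' = r} = {pathLen dist l} := by
    ext r
    constructor
    · rintro ⟨l', hl', hl'X, hl'T, rfl⟩
      rw [hunique l' hl' hl'X hl'T]
      rfl
    · rintro rfl
      exact ⟨l, hl, hlX, hlT, rfl⟩
  rw [lord, hset, csInf_singleton]

lemma lord_eq_pathLen_sort (X : Finset α) :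
    lord dist T X = pathLen dist (@Finset.sort α X T.le _ _ _ _) := by
  let := T
  exact lord_eq_pathLen T (X.sort_nodup _) (X.sort_toFinset _) X.sortedLT_sort.pairwise

lemma lord_nonneg (X : Finset α) : 0 ≤ lord dist T X := by
  rw [lord_eq_pathLen_sort]
  exact pathLen_nonneg _

lemma ORd_nonneg (k : ℕ) : 0 ≤ ORd dist T k := by
  apply Real.sSup_nonneg
  rintro r ⟨X, -, -, rfl⟩
  exact div_nonneg (lord_nonneg T X) (lopt_nonneg X)

lemma lord_le_card_mul_lopt (X : Finset α) : lord dist T X ≤ X.card * lopt dist X := by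
  let := T
  rw [lord_eq_pathLen_sort, ← X.length_sort (· ≤ ·)]
  exact pathLen_le_length_mul (lopt_nonneg X) fun a ha b hb =>
    dist_le_lopt (by simpa using ha) (by simpa using hb)

end OptimalAndOrderedLength

section OrderRatio

variable {α : Type*} [MetricSpace α] (T : LinearOrder α)

lemma lord_le_mul_lopt_of_ORd_le {C : ℝ} (hC0 : 0 ≤ C) {k : ℕ} (hC : ORd dist T k ≤ C)
    {X : Finset α} (hX : X.card ≤ k + 1) : lord dist T X ≤ C * lopt dist X := by
  by_cases hX2 : 2 ≤ X.card
  · have hpos := lopt_pos hX2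
    have hbdd : BddAbove {r : ℝ | ∃ X : Finset α, 2 ≤ X.card ∧ X.card ≤ k + 1 ∧
        r = lord dist T X / lopt dist X} := by
      refine ⟨k + 1, ?_⟩
      rintro r ⟨Y, hY2, hYk, rfl⟩
      rw [div_le_iff₀ (lopt_pos hY2)]
      refine (lord_le_card_mul_lopt T Y).trans (mul_le_mul_of_nonneg_right ?_ (lopt_nonneg Y))
      exact_mod_cast hYk
    have hratio : lord dist T X / lopt dist X ≤ C :=
      (le_csSup hbdd ⟨X, hX2, hX, rfl⟩).trans hC
    rwa [div_le_iff₀ hpos] at hratio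
  · rw [lord_eq_pathLen_sort, pathLen_eq_zero_of_length_le_one (by simp; omega)]
    exact mul_nonneg hC0 (lopt_nonneg X)

lemma ORd_le_of_forall_lord_le {B : ℝ} (hB : 0 ≤ B) {k : ℕ}
    (h : ∀ X : Finset α, X.card ≤ k + 1 → lord dist T X ≤ B * lopt dist X) :
    ORd dist T k ≤ B := by
  refine Real.sSup_le ?_ hB
  rintro r ⟨X, hX2, hXk, rfl⟩
  rw [div_le_iff₀ (lopt_pos hX2)]
  exact h X hXk

end OrderRatio

section BlockOrder

variable {γ δ ι : Type*} [LinearOrder ι]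
  (T : LinearOrder γ) (c : δ → ι) (p : δ → γ) (hcp : Function.Injective fun x => (c x, p x))

abbrev blockOrder : LinearOrder δ :=
  letI := T
  LinearOrder.lift' (fun x => toLex (c x, p x)) (toLex.injective.comp hcp)

lemma blockOrder_lt_iff {x y : δ} :
    (blockOrder T c p hcp).lt x y ↔ c x < c y ∨ c x = c y ∧ T.lt (p x) (p y) := by
  let := T
  exact Prod.Lex.toLex_lt_toLex

variable [MetricSpace γ] [MetricSpace δ] {T c p hcp}

section Blocks

variable (hfib : ∀ x y, c x = c y → dist x y = dist (p x) (p y))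
  (hp : ∀ x y, dist (p x) (p y) ≤ dist x y) {C : ℝ} (hC0 : 0 ≤ C) {k : ℕ}
  (hC : ORd dist T k ≤ C) {X : Finset δ} (hX : X.card ≤ k + 1)
include hfib hp hC0 hC hX

lemma pathLen_le_of_pairwise_blockOrder {i : ι} {l : List δ}
    (hl : l.Pairwise (blockOrder T c p hcp).lt) (hli : ∀ x ∈ l, c x = i)
    (hlX : ∀ x ∈ l, x ∈ X) : pathLen dist l ≤ C * lopt dist X := by
  have hlT : (l.map p).Pairwise T.lt := List.pairwise_map.mpr <|
    hl.imp_of_mem fun hx hy hxy => (((blockOrder_lt_iff T c p hcp).mp hxy).resolve_left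
      (by rw [hli _ hx, hli _ hy]; exact lt_irrefl i)).2
  have hpl : (l.map p).Nodup := by
    let := T
    exact hlT.nodup
  have hY : (l.map p).toFinset.card ≤ k + 1 := by
    let := blockOrder T c p hcp
    rw [List.toFinset_card_of_nodup hpl, List.length_map, ← List.toFinset_card_of_nodup hl.nodup]
    exact (Finset.card_le_card fun x hx => hlX x (List.mem_toFinset.mp hx)).trans hX
  calc pathLen dist l = pathLen dist (l.map p) :=
        (pathLen_map_eq fun x hx y hy => (hfib x y (by rw [hli x hx, hli y hy])).symm).symm
    _ = lord dist T (l.map p).toFinset := (lord_eq_pathLen T hpl rfl hlT).symm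
    _ ≤ C * lopt dist (l.map p).toFinset := lord_le_mul_lopt_of_ORd_le T hC0 hC hY
    _ ≤ C * lopt dist X := by
      refine mul_le_mul_of_nonneg_left (lopt_le_of_forall_mem_exists hp fun y hy => ?_) hC0
      obtain ⟨x, hx, rfl⟩ := List.mem_map.mp (List.mem_toFinset.mp hy)
      exact ⟨x, hlX x hx, rfl⟩

lemma lord_blockOrder_le [Fintype ι] [Nonempty ι] :
    lord dist (blockOrder T c p hcp) X ≤
      (Fintype.card ι * C + (Fintype.card ι - 1)) * lopt dist X := by
  let := blockOrder T c p hcp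
  set block : ι → List δ := fun i => (X.filter (c · = i)).sort (· ≤ ·)
  have hblock : ∀ i, ∀ x ∈ block i, x ∈ X ∧ c x = i := fun i x hx => by simpa [block] using hx
  set indices := (Finset.univ : Finset ι).sort (· ≤ ·)
  set L := indices.flatMap block
  have hLX : ∀ x, x ∈ L ↔ x ∈ X := by simp [L, block, indices]
  have hL : L.Pairwise (· < ·) := List.pairwise_flatMap.mpr
    ⟨fun i _ => (Finset.sortedLT_sort _).pairwise, (Finset.sortedLT_sort _).pairwise.imp
      fun hij x hx y hy => (blockOrder_lt_iff T c p hcp).mpr <| Or.inl <| by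
        rwa [(hblock _ x hx).2, (hblock _ y hy).2]⟩
  have hcard : (((indices.map block).length - 1 : ℕ) : ℝ) = Fintype.card ι - 1 := by
    rw [List.length_map, Finset.length_sort, Finset.card_univ, Nat.cast_pred Fintype.card_pos]
  calc lord dist (blockOrder T c p hcp) X ≤ pathLen dist L :=
        lord_le_pathLen _ hL.nodup (by ext; simp [hLX]) hL
    _ ≤ ((indices.map block).map (pathLen dist)).sum + (Fintype.card ι - 1) * lopt dist X := by
      rw [← hcard, show L = (indices.map block).flatten from List.flatMap_def]
      exact pathLen_flatten_le (lopt_nonneg X) fun a ha b hb =>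
        dist_le_lopt ((hLX a).mp ha) ((hLX b).mp hb)
    _ ≤ Fintype.card ι * (C * lopt dist X) + (Fintype.card ι - 1) * lopt dist X := by
      gcongr
      refine (List.sum_le_card_nsmul _ (C * lopt dist X) ?_).trans_eq ?_
      · simp only [List.mem_map]
        rintro _ ⟨l, ⟨i, -, rfl⟩, rfl⟩
        exact pathLen_le_of_pairwise_blockOrder hfib hp hC0 hC hX (Finset.sortedLT_sort _).pairwise
          (fun x hx => (hblock i x hx).2) fun x hx => (hblock i x hx).1
      · simp [indices]
    _ = _ := by ring

end Blocks

lemma ORd_blockOrder_le [Fintype ι] [Nonempty ι]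
    (hfib : ∀ x y, c x = c y → dist x y = dist (p x) (p y))
    (hp : ∀ x y, dist (p x) (p y) ≤ dist x y) {C : ℝ} (hC0 : 0 ≤ C) {k : ℕ}
    (hC : ORd dist T k ≤ C) :
    ORd dist (blockOrder T c p hcp) k ≤ Fintype.card ι * C + Fintype.card ι - 1 := by
  have hcard : (1 : ℝ) ≤ Fintype.card ι := by exact_mod_cast Fintype.card_pos
  refine ORd_le_of_forall_lord_le _ (by nlinarith) fun X hX => ?_
  exact (lord_blockOrder_le hfib hp hC0 hC hX).trans_eq (by ring)

end BlockOrder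

lemma dist_le_of_dist_eq_sInf {M M' : Type*} [PseudoMetricSpace M] [MetricSpace M']
    {Ω : Set M} {a b : M} {x y : M'} (hxy : x ≠ y)
    (h : dist x y = sInf {r : ℝ | ∃ ω ∈ Ω, r = dist a ω + dist ω b}) : dist a b ≤ dist x y := by
  rcases Set.eq_empty_or_nonempty {r : ℝ | ∃ ω ∈ Ω, r = dist a ω + dist ω b} with hΩ | hΩ
  · rw [hΩ, Real.sInf_empty, dist_eq_zero] at h
    exact absurd h hxy
  · rw [h]
    exact le_csInf hΩ fun r ⟨ω, _, hr⟩ => hr ▸ dist_triangle a ω b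

theorem stmt19_general {M : Type*} [MetricSpace M] (T : LinearOrder M) (C : ℝ)
    (hC : ∀ k : ℕ, 1 ≤ k → ORd (fun x y : M => dist x y) T k ≤ C)
    (Ω : Set M) (s : ℕ) (hs : 1 ≤ s)
    {M' : Type*} [MetricSpace M'] (ψ : Fin s → M → M')
    (hsurj : ∀ x : M', ∃ i : Fin s, ∃ a : M, x = ψ i a)
    (hdsame : ∀ i : Fin s, ∀ a b : M, dist (ψ i a) (ψ i b) = dist a b)
    (hddiff : ∀ i j : Fin s, i ≠ j → ∀ a b : M,
      dist (ψ i a) (ψ j b) = sInf {r : ℝ | ∃ ω ∈ Ω, r = dist a ω + dist ω b}) :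
    ∃ Ts : LinearOrder M', ∀ k : ℕ, 1 ≤ k →
      ORd (fun x y : M' => dist x y) Ts k ≤ (s : ℝ) * C + (s : ℝ) - 1 := by
  have : Nonempty (Fin s) := ⟨⟨0, hs⟩⟩
  choose c p hcp using hsurj
  have hinj : Function.Injective fun x => (c x, p x) := fun x y hxy => by
    rw [hcp x, hcp y, (Prod.mk.inj hxy).1, (Prod.mk.inj hxy).2]
  have hfib : ∀ x y, c x = c y → dist x y = dist (p x) (p y) := fun x y hxy =>
    (congrArg₂ dist (hcp x) (hcp y)).trans (by rw [hxy, hdsame])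
  have hp : ∀ x y, dist (p x) (p y) ≤ dist x y := fun x y => by
    by_cases hxy : c x = c y
    · exact (hfib x y hxy).ge
    exact dist_le_of_dist_eq_sInf (fun h => hxy (congrArg c h))
      ((congrArg₂ dist (hcp x) (hcp y)).trans (hddiff _ _ hxy _ _))
  have hC0 : 0 ≤ C := (ORd_nonneg T 1).trans (hC 1 le_rfl)
  refine ⟨blockOrder T c p hinj, fun k hk => ?_⟩
  simpa only [Fintype.card_fin] using ORd_blockOrder_le hfib hp hC0 (hC k hk)

/-- Let `M` be a metric space with a total order `T` such that `OR_{M,T}(k) ≤ C` for all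
`k ≥ 1`, and let `Ω ⊆ M`.  Let `M'` be the space `M_s(Ω)` obtained by gluing `s` copies of
`M` along `Ω` (axiomatised by copy maps `ψ i : M → M'` with the glued distance: within one
copy the distance of `M`, between different copies the infimum of sums of distances through
points of `Ω`).  Then `M'` admits an order `T_s` with
`OR_{M',T_s}(k) ≤ s·C + s − 1` for all `k ≥ 1`. -/
theorem stmt19 {M : Type*} [MetricSpace M] (T : LinearOrder M) (C : ℝ)
    (hC : ∀ k : ℕ, 1 ≤ k → ORd (fun x y : M => dist x y) T k ≤ C)
    (Ω : Set M) (s : ℕ) (hs : 1 ≤ s)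
    {M' : Type*} [MetricSpace M'] (ψ : Fin s → M → M')
    (hglue : ∀ i j : Fin s, ∀ ω ∈ Ω, ψ i ω = ψ j ω)
    (hinj : ∀ i j : Fin s, ∀ a b : M, ψ i a = ψ j b → a = b ∧ (i ≠ j → a ∈ Ω))
    (hsurj : ∀ x : M', ∃ i : Fin s, ∃ a : M, x = ψ i a)
    (hdsame : ∀ i : Fin s, ∀ a b : M, dist (ψ i a) (ψ i b) = dist a b)
    (hddiff : ∀ i j : Fin s, i ≠ j → ∀ a b : M,
      dist (ψ i a) (ψ j b) = sInf {r : ℝ | ∃ ω ∈ Ω, r = dist a ω + dist ω b}) :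
    ∃ Ts : LinearOrder M', ∀ k : ℕ, 1 ≤ k →
      ORd (fun x y : M' => dist x y) Ts k ≤ (s : ℝ) * C + (s : ℝ) - 1 :=
  stmt19_general T C hC Ω s hs ψ hsurj hdsame hddiff
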